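/- Let m ≥ 1 and let Φ_m be the 2m-qubit state Φ_m = (|0⟩^{⊗2m} + |W_m⟩⊗|W_m⟩)/√2, i.e., the amplitude function with Φ_m(x) = 1/√2 if x is the all-false string, Φ_m(x) = 1/(√2 · m) if the restriction of x to the first m qubits and the restriction to the last m qubits each have exactly one coordinate equal to true, and Φ_m(x) = 0 otherwise. Then for every qubit k, the single-qubit reduced density matrix of Φ_m at k, defined by (ρ_k)_{i j} = Σ_y Φ_m(y extended by value i at k) · conj(Φ_m(y extended by value j at k)) where y ranges over assignments of the remaining 2m−1 qubits and i, j ∈ {0,1}, is the diagonal matrix diag(1 − 1/(2m), 1/(2m)). (In particular, the single-qubit entropies tend to 0 as m → ∞, even though Φ_m is a maximally entangled logical Bell state for the encoding |𝟘⟩ = |0⟩^{⊗m}, |𝟙⟩ = |W_m⟩.) -/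

import Mathlib

open scoped BigOperators Classical

noncomputable section

set_option maxHeartbeats 1000000

open Finset

/-- The `2m`-qubit state `Φ_m = (|0⟩^{⊗2m} + |W_m⟩⊗|W_m⟩)/√2`: amplitude `1/√2`
on the all-`false` string, amplitude `1/(√2·m)` on the strings whose restriction
to the first `m` qubits and whose restriction to the last `m` qubits each have
exactly one coordinate equal to `true`, and `0` elsewhere. -/
def PhiW (m : ℕ) : (Fin (2 * m) → Bool) → ℂ :=
  fun x =>
    if ∀ i, x i = false then 1 / (Real.sqrt 2 : ℂ)
    else if (Finset.univ.filter fun i : Fin (2 * m) => i.val < m ∧ x i = true).card = 1 ∧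
            (Finset.univ.filter fun i : Fin (2 * m) => m ≤ i.val ∧ x i = true).card = 1
    then 1 / ((Real.sqrt 2 : ℂ) * m) else 0

/-- Extension of an assignment `y` of the qubits other than `k` by the value `i`
at the qubit `k`. -/
def extendAt {V : Type} [DecidableEq V] (k : V) (i : Bool)
    (y : {v : V // v ≠ k} → Bool) : V → Bool :=
  fun v => if h : v = k then i else y ⟨v, h⟩

lemma count_functions (S : Type) [Fintype S] [DecidableEq S] (a : ℕ) :
    (∑ w : S → Bool, if (Finset.univ.filter fun s => w s = true).card = a then (1:ℂ) else 0)
      = (Fintype.card S).choose a := by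
  rw [Finset.sum_boole]
  norm_cast
  rw [← Fintype.card_subtype]
  have e : {w : S → Bool // (Finset.univ.filter fun s => w s = true).card = a}
      ≃ {s : Finset S // s ∈ Finset.powersetCard a Finset.univ} := by
    refine ⟨fun w => ⟨Finset.univ.filter fun s => w.1 s = true, ?_⟩,
           fun s => ⟨fun v => v ∈ s.1, ?_⟩, ?_, ?_⟩
    · simp [Finset.mem_powersetCard, w.2]
    · have := (Finset.mem_powersetCard.mp s.2).2
      simpa using this
    · rintro ⟨w, hw⟩; ext v; simp
    · rintro ⟨s, hs⟩; ext v; simp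
  rw [Fintype.card_congr e, Fintype.card_coe, Finset.card_powersetCard, Finset.card_univ]

lemma filter_card_subtype (α : Type) [Fintype α] [DecidableEq α] (p q : α → Prop)
    [DecidablePred p] [DecidablePred q] :
    (Finset.univ.filter fun v => p v ∧ q v).card
      = (Finset.univ.filter fun u : {v // p v} => q ↑u).card := by
  rw [Finset.card_filter, Finset.card_filter]
  calc (∑ i : α, if p i ∧ q i then 1 else 0)
      = ∑ i : α, (if p i then (if q i then 1 else 0) else 0) := by
        refine Finset.sum_congr rfl fun i _ => ?_
        by_cases h1 : p i <;> by_cases h2 : q i <;> simp [h1, h2]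
    _ = ∑ i ∈ Finset.univ.filter p, (if q i then 1 else 0) := (Finset.sum_filter _ _).symm
    _ = ∑ u : {v // p v}, (if q ↑u then 1 else 0) :=
        Finset.sum_subtype _ (by simp) _

lemma sum_count (α : Type) [Fintype α] [DecidableEq α] (p : α → Prop) [DecidablePred p]
    (a b : ℕ) (c : ℂ) :
    (∑ y : α → Bool,
        if (Finset.univ.filter fun v => p v ∧ y v = true).card = a ∧
           (Finset.univ.filter fun v => ¬ p v ∧ y v = true).card = b then c else 0)
      = c * (Fintype.card {v // p v}).choose a * (Fintype.card {v // ¬ p v}).choose b := by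
  rw [← Equiv.sum_comp (Equiv.piEquivPiSubtypeProd p (fun _ => Bool)).symm]
  set e := (Equiv.piEquivPiSubtypeProd p (fun _ => Bool)).symm with he
  rw [Fintype.sum_prod_type]
  have happ : ∀ (y1 : {v // p v} → Bool) (y2 : {v // ¬ p v} → Bool) (v : α),
      e (y1, y2) v = if h : p v then y1 ⟨v, h⟩ else y2 ⟨v, h⟩ := by
    intro y1 y2 v
    simp [he, Equiv.piEquivPiSubtypeProd]
  have key1 : ∀ (y1 : {v // p v} → Bool) (y2 : {v // ¬ p v} → Bool),
      (Finset.univ.filter fun v => p v ∧ (e (y1, y2)) v = true).card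
        = (Finset.univ.filter fun u : {v // p v} => y1 u = true).card := by
    intro y1 y2
    rw [filter_card_subtype]
    refine Finset.card_bij (fun u _ => u) (fun u hu => ?_) (by simp) (fun u hu => ⟨u, by
      simp only [Finset.mem_filter, Finset.mem_univ, true_and] at hu ⊢
      simp [happ, u.2, hu], rfl⟩)
    simp only [Finset.mem_filter, Finset.mem_univ, true_and] at hu ⊢
    simpa [happ, u.2] using hu
  have key2 : ∀ (y1 : {v // p v} → Bool) (y2 : {v // ¬ p v} → Bool),
      (Finset.univ.filter fun v => ¬ p v ∧ (e (y1, y2)) v = true).card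
        = (Finset.univ.filter fun u : {v // ¬ p v} => y2 u = true).card := by
    intro y1 y2
    rw [filter_card_subtype]
    refine Finset.card_bij (fun u _ => u) (fun u hu => ?_) (by simp) (fun u hu => ⟨u, by
      simp only [Finset.mem_filter, Finset.mem_univ, true_and] at hu ⊢
      simp [happ, u.2, hu], rfl⟩)
    simp only [Finset.mem_filter, Finset.mem_univ, true_and] at hu ⊢
    simpa [happ, u.2] using hu
  calc (∑ y1 : {v // p v} → Bool, ∑ y2 : {v // ¬ p v} → Bool,
        if (Finset.univ.filter fun v => p v ∧ (e (y1, y2)) v = true).card = a ∧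
           (Finset.univ.filter fun v => ¬ p v ∧ (e (y1, y2)) v = true).card = b then c else 0)
      = ∑ y1 : {v // p v} → Bool, ∑ y2 : {v // ¬ p v} → Bool,
          c * ((if (Finset.univ.filter fun u : {v // p v} => y1 u = true).card = a then (1:ℂ) else 0)
            * (if (Finset.univ.filter fun u : {v // ¬ p v} => y2 u = true).card = b then (1:ℂ) else 0)) := by
        refine Finset.sum_congr rfl fun y1 _ => Finset.sum_congr rfl fun y2 _ => ?_
        rw [key1, key2]
        by_cases h1 : (Finset.univ.filter fun u : {v // p v} => y1 u = true).card = a <;>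
          by_cases h2 : (Finset.univ.filter fun u : {v // ¬ p v} => y2 u = true).card = b <;>
          simp [h1, h2]
    _ = c * (Fintype.card {v // p v}).choose a * (Fintype.card {v // ¬ p v}).choose b := by
        simp_rw [← Finset.mul_sum]
        rw [← Finset.sum_mul, count_functions, count_functions]
        ring

lemma count_extend {V : Type} [Fintype V] [DecidableEq V] (k : V) (i : Bool)
    (y : {v : V // v ≠ k} → Bool) (q : V → Prop) [DecidablePred q] :
    (Finset.univ.filter fun v => q v ∧ extendAt k i y v = true).card
      = (Finset.univ.filter fun u : {v // v ≠ k} => q ↑u ∧ y u = true).card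
        + (if q k ∧ i = true then 1 else 0) := by
  rw [Finset.card_filter, Finset.card_filter]
  rw [← Finset.sum_erase_add Finset.univ _ (Finset.mem_univ k)]
  congr 1
  · rw [Finset.sum_subtype (p := fun v => v ≠ k) (Finset.univ.erase k) (by simp) fun v =>
      if q v ∧ extendAt k i y v = true then 1 else 0]
    refine Finset.sum_congr rfl fun u _ => ?_
    simp [extendAt, u.2]
  · simp [extendAt]

lemma extend_allfalse {V : Type} [DecidableEq V] (k : V) (i : Bool)
    (y : {v : V // v ≠ k} → Bool) :
    (∀ v, extendAt k i y v = false) ↔ (i = false ∧ ∀ u, y u = false) := by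
  constructor
  · intro h
    refine ⟨by simpa [extendAt] using h k, fun u => by simpa [extendAt, u.2] using h ↑u⟩
  · rintro ⟨hi, hy⟩ v
    by_cases hv : v = k <;> simp [extendAt, hv, hi, hy]

lemma allfalse_iff_counts (m : ℕ) (k : Fin (2 * m)) (y : {v : Fin (2 * m) // v ≠ k} → Bool) :
    (∀ u, y u = false) ↔
      ((Finset.univ.filter fun u : {v : Fin (2 * m) // v ≠ k} =>
          (u : Fin (2 * m)).val < m ∧ y u = true).card = 0 ∧
       (Finset.univ.filter fun u : {v : Fin (2 * m) // v ≠ k} =>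
          ¬ (u : Fin (2 * m)).val < m ∧ y u = true).card = 0) := by
  simp only [Finset.card_eq_zero, Finset.eq_empty_iff_forall_notMem, Finset.mem_filter,
    Finset.mem_univ, true_and]
  constructor
  · intro h
    constructor <;> intro u <;> simp [h u]
  · rintro ⟨h1, h2⟩ u
    by_cases hu : (u : Fin (2 * m)).val < m
    · have := h1 u; simp [hu] at this; simp [this]
    · have := h2 u; simp [hu] at this; simp [this]

lemma PhiW_extend (m : ℕ) (k : Fin (2 * m)) (i : Bool)
    (y : {v : Fin (2 * m) // v ≠ k} → Bool) :
    PhiW m (extendAt k i y) =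
      (if i = false then
        (if (Finset.univ.filter fun u : {v : Fin (2 * m) // v ≠ k} =>
              (u : Fin (2 * m)).val < m ∧ y u = true).card = 0 ∧
            (Finset.univ.filter fun u : {v : Fin (2 * m) // v ≠ k} =>
              ¬ (u : Fin (2 * m)).val < m ∧ y u = true).card = 0
         then 1 / (Real.sqrt 2 : ℂ)
         else if (Finset.univ.filter fun u : {v : Fin (2 * m) // v ≠ k} =>
              (u : Fin (2 * m)).val < m ∧ y u = true).card = 1 ∧
            (Finset.univ.filter fun u : {v : Fin (2 * m) // v ≠ k} =>
              ¬ (u : Fin (2 * m)).val < m ∧ y u = true).card = 1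
         then 1 / ((Real.sqrt 2 : ℂ) * m) else 0)
       else if k.val < m then
        (if (Finset.univ.filter fun u : {v : Fin (2 * m) // v ≠ k} =>
              (u : Fin (2 * m)).val < m ∧ y u = true).card = 0 ∧
            (Finset.univ.filter fun u : {v : Fin (2 * m) // v ≠ k} =>
              ¬ (u : Fin (2 * m)).val < m ∧ y u = true).card = 1
         then 1 / ((Real.sqrt 2 : ℂ) * m) else 0)
       else
        (if (Finset.univ.filter fun u : {v : Fin (2 * m) // v ≠ k} =>
              (u : Fin (2 * m)).val < m ∧ y u = true).card = 1 ∧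
            (Finset.univ.filter fun u : {v : Fin (2 * m) // v ≠ k} =>
              ¬ (u : Fin (2 * m)).val < m ∧ y u = true).card = 0
         then 1 / ((Real.sqrt 2 : ℂ) * m) else 0)) := by
  have hA := count_extend k i y (fun v : Fin (2 * m) => v.val < m)
  have hB := count_extend k i y (fun v : Fin (2 * m) => m ≤ v.val)
  have hBc : (Finset.univ.filter fun u : {v : Fin (2 * m) // v ≠ k} =>
      m ≤ (u : Fin (2 * m)).val ∧ y u = true)
      = (Finset.univ.filter fun u : {v : Fin (2 * m) // v ≠ k} =>
      ¬ (u : Fin (2 * m)).val < m ∧ y u = true) := by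
    refine Finset.filter_congr fun u _ => ?_
    rw [not_lt]
  rw [hBc] at hB
  set t1 := (Finset.univ.filter fun u : {v : Fin (2 * m) // v ≠ k} =>
      (u : Fin (2 * m)).val < m ∧ y u = true).card with ht1
  set t2 := (Finset.univ.filter fun u : {v : Fin (2 * m) // v ≠ k} =>
      ¬ (u : Fin (2 * m)).val < m ∧ y u = true).card with ht2
  unfold PhiW
  simp only [extend_allfalse, allfalse_iff_counts, ← ht1, ← ht2, hA, hB]
  cases i
  · simp only [Bool.false_eq_true, and_false, if_false, add_zero, if_true, eq_self_iff_true,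
      true_and, and_true, if_pos]
  · by_cases hk : k.val < m
    · have hk' : ¬ m ≤ k.val := not_le.mpr hk
      simp only [hk, hk', Bool.true_eq_false, false_and, and_true, true_and, and_false,
        if_true, if_false, add_zero, if_neg, not_false_iff]
      split_ifs <;> first | rfl | omega
    · have hk' : m ≤ k.val := not_lt.mp hk
      simp only [hk, hk', Bool.true_eq_false, false_and, and_true, true_and, and_false,
        if_true, if_false, add_zero, if_neg, not_false_iff]
      split_ifs <;> first | rfl | omega

lemma card_lt_half (m : ℕ) : (Finset.univ.filter fun v : Fin (2 * m) => v.val < m).card = m := by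
  rcases Nat.eq_zero_or_pos m with hm | hm
  · subst hm; simp
  · have : (Finset.univ.filter fun v : Fin (2 * m) => v.val < m)
        = Finset.Iio (⟨m, by omega⟩ : Fin (2 * m)) := by
      ext v; simp [Fin.lt_def]
    rw [this, Fin.card_Iio]

lemma card_ge_half (m : ℕ) :
    (Finset.univ.filter fun v : Fin (2 * m) => ¬ v.val < m).card = m := by
  have h := Finset.card_filter_add_card_filter_not
    (s := (Finset.univ : Finset (Fin (2 * m)))) (p := fun v => v.val < m)
  rw [Finset.card_univ, Fintype.card_fin, card_lt_half] at h
  omega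

lemma cardP (m : ℕ) (k : Fin (2 * m)) :
    Fintype.card {u : {v : Fin (2 * m) // v ≠ k} // (u : Fin (2 * m)).val < m}
      = if k.val < m then m - 1 else m := by
  rw [Fintype.card_congr (Equiv.subtypeSubtypeEquivSubtypeInter (fun v : Fin (2 * m) => v ≠ k)
    (fun v => v.val < m)), Fintype.card_subtype]
  by_cases hk : k.val < m
  · rw [if_pos hk]
    have : (Finset.univ.filter fun v : Fin (2 * m) => v ≠ k ∧ v.val < m)
        = (Finset.univ.filter fun v : Fin (2 * m) => v.val < m).erase k := by
      ext v; simp only [Finset.mem_filter, Finset.mem_univ, true_and, Finset.mem_erase]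
    rw [this, Finset.card_erase_of_mem (by simp [hk]), card_lt_half]
  · rw [if_neg hk]
    have : (Finset.univ.filter fun v : Fin (2 * m) => v ≠ k ∧ v.val < m)
        = (Finset.univ.filter fun v : Fin (2 * m) => v.val < m) := by
      ext v
      simp only [Finset.mem_filter, Finset.mem_univ, true_and]
      exact ⟨fun h => h.2, fun hv => ⟨by rintro rfl; exact hk hv, hv⟩⟩
    rw [this, card_lt_half]

lemma cardNP (m : ℕ) (k : Fin (2 * m)) :
    Fintype.card {u : {v : Fin (2 * m) // v ≠ k} // ¬ (u : Fin (2 * m)).val < m}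
      = if k.val < m then m else m - 1 := by
  rw [Fintype.card_congr (Equiv.subtypeSubtypeEquivSubtypeInter (fun v : Fin (2 * m) => v ≠ k)
    (fun v => ¬ v.val < m)), Fintype.card_subtype]
  by_cases hk : k.val < m
  · rw [if_pos hk]
    have : (Finset.univ.filter fun v : Fin (2 * m) => v ≠ k ∧ ¬ v.val < m)
        = (Finset.univ.filter fun v : Fin (2 * m) => ¬ v.val < m) := by
      ext v
      simp only [Finset.mem_filter, Finset.mem_univ, true_and]
      exact ⟨fun h => h.2, fun hv => ⟨by rintro rfl; exact hv hk, hv⟩⟩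
    rw [this, card_ge_half]
  · rw [if_neg hk]
    have : (Finset.univ.filter fun v : Fin (2 * m) => v ≠ k ∧ ¬ v.val < m)
        = (Finset.univ.filter fun v : Fin (2 * m) => ¬ v.val < m).erase k := by
      ext v; simp only [Finset.mem_filter, Finset.mem_univ, true_and, Finset.mem_erase]
    have hkmem : k ∈ (Finset.univ.filter fun v : Fin (2 * m) => ¬ v.val < m) := by
      simp only [Finset.mem_filter, Finset.mem_univ, true_and]; exact hk
    rw [this, Finset.card_erase_of_mem hkmem, card_ge_half]

/-- For `m ≥ 1` and every qubit `k`, the single-qubit reduced density matrix of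
`Φ_m` at `k`, with entries
`(ρ_k)_{ij} = Σ_y Φ_m(y, k↦i) · conj(Φ_m(y, k↦j))` (where `y` ranges over the
assignments of the remaining `2m−1` qubits and `false ↔ 0`, `true ↔ 1`), is the
diagonal matrix `diag(1 − 1/(2m), 1/(2m))`.  (In particular the single-qubit
entropies tend to `0` as `m → ∞`, even though `Φ_m` is a maximally entangled
logical Bell state for the encoding `|𝟘⟩ = |0⟩^{⊗m}`, `|𝟙⟩ = |W_m⟩`.) -/
theorem PhiW_reduced_density_matrix (m : ℕ) (hm : 1 ≤ m) (k : Fin (2 * m))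
    (i j : Bool) :
    (∑ y : {v : Fin (2 * m) // v ≠ k} → Bool,
        PhiW m (extendAt k i y) * (starRingEnd ℂ) (PhiW m (extendAt k j y)))
      = if i = false ∧ j = false then 1 - 1 / (2 * (m : ℂ))
        else if i = true ∧ j = true then 1 / (2 * (m : ℂ)) else 0 := by
  have hm0 : (m : ℂ) ≠ 0 := Nat.cast_ne_zero.mpr (by omega)
  have hs2 : (Real.sqrt 2 : ℂ) * (Real.sqrt 2 : ℂ) = 2 := by
    rw [← Complex.ofReal_mul, Real.mul_self_sqrt (by norm_num)]; norm_num
  have hs2ne : (Real.sqrt 2 : ℂ) ≠ 0 := by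
    intro h; rw [h, mul_zero] at hs2; norm_num at hs2
  have haa : (1 / (Real.sqrt 2 : ℂ)) * (starRingEnd ℂ) (1 / (Real.sqrt 2 : ℂ)) = 1/2 := by
    rw [map_div₀, map_one, Complex.conj_ofReal, div_mul_div_comm, one_mul, hs2]
  have hbb : (1 / ((Real.sqrt 2 : ℂ) * m)) * (starRingEnd ℂ) (1 / ((Real.sqrt 2 : ℂ) * m))
      = 1 / (2 * (m : ℂ)^2) := by
    rw [map_div₀, map_one, map_mul, Complex.conj_ofReal, Complex.conj_natCast,
      div_mul_div_comm, one_mul]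
    congr 1
    ring_nf
    rw [sq, hs2]
    ring
  simp only [PhiW_extend]
  cases i <;> cases j
  · -- false false
    simp only [if_pos rfl, if_true, and_self]
    rw [show (∑ y : {v : Fin (2 * m) // v ≠ k} → Bool,
        (if (Finset.univ.filter fun u : {v : Fin (2 * m) // v ≠ k} =>
              (u : Fin (2 * m)).val < m ∧ y u = true).card = 0 ∧
            (Finset.univ.filter fun u : {v : Fin (2 * m) // v ≠ k} =>
              ¬ (u : Fin (2 * m)).val < m ∧ y u = true).card = 0
         then 1 / (Real.sqrt 2 : ℂ)
         else if (Finset.univ.filter fun u : {v : Fin (2 * m) // v ≠ k} =>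
              (u : Fin (2 * m)).val < m ∧ y u = true).card = 1 ∧
            (Finset.univ.filter fun u : {v : Fin (2 * m) // v ≠ k} =>
              ¬ (u : Fin (2 * m)).val < m ∧ y u = true).card = 1
         then 1 / ((Real.sqrt 2 : ℂ) * m) else 0) *
        (starRingEnd ℂ) (if (Finset.univ.filter fun u : {v : Fin (2 * m) // v ≠ k} =>
              (u : Fin (2 * m)).val < m ∧ y u = true).card = 0 ∧
            (Finset.univ.filter fun u : {v : Fin (2 * m) // v ≠ k} =>
              ¬ (u : Fin (2 * m)).val < m ∧ y u = true).card = 0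
         then 1 / (Real.sqrt 2 : ℂ)
         else if (Finset.univ.filter fun u : {v : Fin (2 * m) // v ≠ k} =>
              (u : Fin (2 * m)).val < m ∧ y u = true).card = 1 ∧
            (Finset.univ.filter fun u : {v : Fin (2 * m) // v ≠ k} =>
              ¬ (u : Fin (2 * m)).val < m ∧ y u = true).card = 1
         then 1 / ((Real.sqrt 2 : ℂ) * m) else 0))
      = ∑ y : {v : Fin (2 * m) // v ≠ k} → Bool,
        ((if (Finset.univ.filter fun u : {v : Fin (2 * m) // v ≠ k} =>
              (u : Fin (2 * m)).val < m ∧ y u = true).card = 0 ∧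
            (Finset.univ.filter fun u : {v : Fin (2 * m) // v ≠ k} =>
              ¬ (u : Fin (2 * m)).val < m ∧ y u = true).card = 0 then (1/2 : ℂ) else 0)
         + (if (Finset.univ.filter fun u : {v : Fin (2 * m) // v ≠ k} =>
              (u : Fin (2 * m)).val < m ∧ y u = true).card = 1 ∧
            (Finset.univ.filter fun u : {v : Fin (2 * m) // v ≠ k} =>
              ¬ (u : Fin (2 * m)).val < m ∧ y u = true).card = 1
            then 1 / (2 * (m : ℂ)^2) else 0))
      from Finset.sum_congr rfl fun y _ => by
        split_ifs <;> first | (exfalso; omega) | (rw [haa]; ring) | (rw [hbb]; ring) | simp]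
    rw [Finset.sum_add_distrib,
      sum_count _ (fun u : {v : Fin (2 * m) // v ≠ k} => (u : Fin (2 * m)).val < m) 0 0 (1/2),
      sum_count _ (fun u : {v : Fin (2 * m) // v ≠ k} => (u : Fin (2 * m)).val < m) 1 1
        (1 / (2 * (m : ℂ)^2)),
      cardP, cardNP]
    simp only [Nat.choose_zero_right, Nat.choose_one_right, Nat.cast_one, mul_one,
      and_self, if_true]
    by_cases hk : k.val < m <;>
      · simp only [hk, if_true, if_false]
        rw [Nat.cast_sub hm]
        push_cast
        field_simp
        ring
  · -- false true
    refine Eq.trans (Finset.sum_eq_zero fun y _ => ?_) ?_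
    · split_ifs <;> first | (exfalso; omega) | exact (‹False›).elim | exact absurd rfl ‹¬false = false› | simp
    · norm_num
  · -- true false
    refine Eq.trans (Finset.sum_eq_zero fun y _ => ?_) ?_
    · split_ifs <;> first | (exfalso; omega) | exact (‹False›).elim | exact absurd rfl ‹¬false = false› | simp
    · norm_num
  · -- true true
    by_cases hk : k.val < m
    · trans (∑ y : {v : Fin (2 * m) // v ≠ k} → Bool,
          if (Finset.univ.filter fun u : {v : Fin (2 * m) // v ≠ k} =>
                (u : Fin (2 * m)).val < m ∧ y u = true).card = 0 ∧
             (Finset.univ.filter fun u : {v : Fin (2 * m) // v ≠ k} =>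
                ¬ (u : Fin (2 * m)).val < m ∧ y u = true).card = 1
          then 1 / (2 * (m : ℂ)^2) else 0)
      · refine Finset.sum_congr rfl fun y _ => ?_
        split_ifs <;> first | (exfalso; omega) | exact (‹False›).elim | exact absurd rfl ‹¬false = false› | exact hbb | simp
      · rw [sum_count _ (fun u : {v : Fin (2 * m) // v ≠ k} => (u : Fin (2 * m)).val < m) 0 1
          (1 / (2 * (m : ℂ)^2)), cardP, cardNP]
        simp only [hk, if_true, Nat.choose_zero_right, Nat.choose_one_right, Nat.cast_one,
          mul_one]
        norm_num
        field_simp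
    · trans (∑ y : {v : Fin (2 * m) // v ≠ k} → Bool,
          if (Finset.univ.filter fun u : {v : Fin (2 * m) // v ≠ k} =>
                (u : Fin (2 * m)).val < m ∧ y u = true).card = 1 ∧
             (Finset.univ.filter fun u : {v : Fin (2 * m) // v ≠ k} =>
                ¬ (u : Fin (2 * m)).val < m ∧ y u = true).card = 0
          then 1 / (2 * (m : ℂ)^2) else 0)
      · refine Finset.sum_congr rfl fun y _ => ?_
        split_ifs <;> first | (exfalso; omega) | exact (‹False›).elim | exact absurd rfl ‹¬false = false› | exact hbb | simp
      · rw [sum_count _ (fun u : {v : Fin (2 * m) // v ≠ k} => (u : Fin (2 * m)).val < m) 1 0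
          (1 / (2 * (m : ℂ)^2)), cardP, cardNP]
        simp only [hk, if_false, Nat.choose_zero_right, Nat.choose_one_right, Nat.cast_one,
          mul_one]
        norm_num
        field_simp
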